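/- The temperature-τ softmax map σ_τ : ℝ^m → ℝ^m, defined by σ_τ(u)_i = exp(u_i/τ) / Σ_j exp(u_j/τ), is Lipschitz with constant 1/(2τ) with respect to the ℓ∞ norm: for all u, v ∈ ℝ^m, ‖σ_τ(u) − σ_τ(v)‖_∞ ≤ (1/(2τ))·‖u − v‖_∞. -/

import Mathlib

/-!
With `a = exp (‖u - v‖ / τ)`, every weight `exp (u j / τ)` lies within a factor `a` of
`exp (v j / τ)`. Raising the `i`-th weight and lowering the others by that factor moves the
`i`-th coordinate of the softmax by at most `(a - 1) / (a + 1) = tanh (‖u - v‖ / (2 τ))`, and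
`tanh t ≤ t`, which is the inequality `2 (a - 1) / (a + 1) ≤ log a`.
-/

open Real Finset

/-- Temperature-τ softmax. -/
noncomputable def softmaxT {m : ℕ} (τ : ℝ) (u : Fin m → ℝ) : Fin m → ℝ :=
  fun i => Real.exp (u i / τ) / ∑ j, Real.exp (u j / τ)

lemma div_add_sub_div_add_le {a A B C D : ℝ} (ha : 1 ≤ a) (hA : 0 < A) (hB : 0 ≤ B)
    (hC : 0 < C) (hD : 0 ≤ D) (hAC : A ≤ a * C) (hDB : D ≤ a * B) :
    A / (A + B) - C / (C + D) ≤ (a - 1) / (a + 1) := by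
  have hCD : 0 < C + D := by positivity
  have hC' : 0 < a ^ 2 * C + D := by positivity
  have hmono : A / (A + B) ≤ a ^ 2 * C / (a ^ 2 * C + D) := by
    rw [div_le_div_iff₀ (by positivity) hC']
    nlinarith [mul_le_mul hAC hDB hD (by positivity)]
  -- the gap to `(a - 1) / (a + 1)` is `(a - 1) * (a * C - D) ^ 2` over a positive denominator
  have hextreme : a ^ 2 * C / (a ^ 2 * C + D) - C / (C + D) ≤ (a - 1) / (a + 1) := by
    rw [div_sub_div _ _ hC'.ne' hCD.ne', div_le_div_iff₀ (by positivity) (by positivity)]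
    nlinarith [mul_nonneg (sub_nonneg.2 ha) (sq_nonneg (a * C - D))]
  linarith

lemma div_sum_sub_div_sum_le {ι : Type*} [Fintype ι] {x y : ι → ℝ} {a : ℝ} (ha : 1 ≤ a)
    (hx : ∀ j, 0 < x j) (hy : ∀ j, 0 < y j) (hxy : ∀ j, x j ≤ a * y j)
    (hyx : ∀ j, y j ≤ a * x j) (i : ι) :
    x i / ∑ j, x j - y i / ∑ j, y j ≤ (a - 1) / (a + 1) := by
  classical
  rw [← add_sum_erase _ _ (mem_univ i), ← add_sum_erase _ _ (mem_univ i)]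
  refine div_add_sub_div_add_le ha (hx i) (sum_nonneg fun j _ => (hx j).le) (hy i)
    (sum_nonneg fun j _ => (hy j).le) (hxy i) ?_
  rw [mul_sum]
  exact sum_le_sum fun j _ => hyx j

lemma sub_one_div_add_one_le_half_log {a : ℝ} (ha : 1 ≤ a) :
    (a - 1) / (a + 1) ≤ log a / 2 := by
  have h := le_log_one_add_of_nonneg (sub_nonneg.2 ha)
  rw [add_sub_cancel] at h
  rw [div_le_div_iff₀ (by linarith) two_pos]
  rw [div_le_iff₀ (by linarith)] at h
  linarith

lemma exp_div_le_exp_norm_sub_div_mul {m : ℕ} {τ : ℝ} (hτ : 0 ≤ τ) (u v : Fin m → ℝ)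
    (j : Fin m) : exp (u j / τ) ≤ exp (‖u - v‖ / τ) * exp (v j / τ) := by
  rw [← exp_add, exp_le_exp, ← add_div]
  gcongr
  have h := (abs_le.1 ((Real.norm_eq_abs _).symm.trans_le (norm_le_pi_norm (u - v) j))).2
  rw [Pi.sub_apply] at h
  linarith

lemma softmaxT_sub_le {m : ℕ} {τ : ℝ} (hτ : 0 ≤ τ) (u v : Fin m → ℝ) (i : Fin m) :
    softmaxT τ u i - softmaxT τ v i ≤ (1 / (2 * τ)) * ‖u - v‖ := by
  have ha : 1 ≤ exp (‖u - v‖ / τ) := one_le_exp (by positivity)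
  calc softmaxT τ u i - softmaxT τ v i
      ≤ (exp (‖u - v‖ / τ) - 1) / (exp (‖u - v‖ / τ) + 1) :=
        div_sum_sub_div_sum_le ha (fun _ => exp_pos _) (fun _ => exp_pos _)
          (exp_div_le_exp_norm_sub_div_mul hτ u v)
          (fun j => norm_sub_rev u v ▸ exp_div_le_exp_norm_sub_div_mul hτ v u j) i
    _ ≤ log (exp (‖u - v‖ / τ)) / 2 := sub_one_div_add_one_le_half_log ha
    _ = (1 / (2 * τ)) * ‖u - v‖ := by rw [log_exp]; ring

theorem stmt_1_general (m : ℕ) (τ : ℝ) (hτ : 0 < τ) (u v : Fin m → ℝ) :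
    ‖softmaxT τ u - softmaxT τ v‖ ≤ (1 / (2 * τ)) * ‖u - v‖ := by
  refine (pi_norm_le_iff_of_nonneg (by positivity)).2 fun i => ?_
  rw [Pi.sub_apply, Real.norm_eq_abs, abs_sub_le_iff]
  exact ⟨softmaxT_sub_le hτ.le u v i, norm_sub_rev u v ▸ softmaxT_sub_le hτ.le v u i⟩

/-- The temperature-τ softmax is `1/(2τ)`-Lipschitz in the ℓ∞ norm. -/
theorem stmt_1 (m : ℕ) (hm : 1 ≤ m) (τ : ℝ) (hτ : 0 < τ) (u v : Fin m → ℝ) :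
    ‖softmaxT τ u - softmaxT τ v‖ ≤ (1 / (2 * τ)) * ‖u - v‖ :=
  stmt_1_general m τ hτ u v
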